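/- arXiv:1010.3875 — 6 statements merged into one kernel-verified Lean document; each statement's English description precedes it below -/
import Mathlib

section
/- Let $d \ge 1$ be an integer, $\alpha \in (d, d+2)$ and $R > 0$. For $t > 1$ set $r(t) = t^{(\alpha-d+2)/(4\alpha)}$. Then $\lim_{t \to \infty} \sup_{\mu \in \mathcal{P}(\bar B(0,R))} \; t^{-\frac{\alpha+d-2}{2\alpha}}\, r(t)^d \int_{\{|y| \le t^{(d+2-\alpha)/(4(\alpha+1))}\}} \bigl| e^{-t\,\hat v(r(t) y)} - e^{-t \int \hat v(r(t)(x-y))\,\mu(\mathrm{d}x)} \bigr|\,\mathrm{d}y = 0$. -/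
open MeasureTheory Real Filter
open scoped Classical

/-- The shape function `v̂(y) = min(|y|^{-α}, 1)`, with `v̂(0) = 1`. -/
noncomputable def hatv (d : ℕ) (α : ℝ) (y : EuclideanSpace ℝ (Fin d)) : ℝ :=
  if y = 0 then 1 else min (‖y‖ ^ (-α)) 1

/-! Write `r = t ^ a` and `ρ = t ^ b` for the two scales of the statement. For `‖y‖ ≤ ρ`, both
`r • y` and `r • (x - y)` with `‖x‖ ≤ R` have norm at most `(R + 1) r ρ`, so both exponents are
at least `t · min (((R + 1) r ρ) ^ (-α)) 1`. The exponents `a`, `b` satisfy `t (r ρ) ^ (-α) = ρ`,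
so this is at least `(R + 1) ^ (-α) t ^ b` and the integrand is `≤ exp (-(R + 1) ^ (-α) t ^ b)`.
Integrating over the ball of radius `ρ` only adds a polynomial factor, and the stretched
exponential beats every power of `t`. -/

open scoped Topology

section ShapeFunction

variable {d : ℕ} {α : ℝ}

lemma hatv_nonneg (y : EuclideanSpace ℝ (Fin d)) : 0 ≤ hatv d α y := by
  unfold hatv; split_ifs
  · exact zero_le_one
  · exact le_min (rpow_nonneg (norm_nonneg _) _) zero_le_one

lemma hatv_le_one (y : EuclideanSpace ℝ (Fin d)) : hatv d α y ≤ 1 := by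
  unfold hatv; split_ifs
  · exact le_rfl
  · exact min_le_right _ _

lemma measurable_hatv : Measurable (hatv d α) :=
  Measurable.ite (measurableSet_singleton 0) measurable_const
    ((measurable_norm.pow_const _).min measurable_const)

lemma min_rpow_le_hatv (hα : 0 ≤ α) {M : ℝ} {z : EuclideanSpace ℝ (Fin d)} (hz : ‖z‖ ≤ M) :
    min (M ^ (-α)) 1 ≤ hatv d α z := by
  unfold hatv; split_ifs with h
  · exact min_le_right _ _
  · exact min_le_min_right _ (rpow_le_rpow_of_nonpos (norm_pos_iff.2 h) hz (neg_nonpos.2 hα))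

lemma min_rpow_le_integral_hatv {X : Type*} [MeasurableSpace X] {μ : Measure X}
    [IsProbabilityMeasure μ] {f : X → EuclideanSpace ℝ (Fin d)} (hf : AEMeasurable f μ)
    (hα : 0 ≤ α) {M : ℝ} (hfM : ∀ᵐ x ∂μ, ‖f x‖ ≤ M) :
    min (M ^ (-α)) 1 ≤ ∫ x, hatv d α (f x) ∂μ := by
  have hint : Integrable (fun x ↦ hatv d α (f x)) μ :=
    .of_bound (measurable_hatv.comp_aemeasurable hf).aestronglyMeasurable 1 <| ae_of_all _
      fun x ↦ by rw [norm_of_nonneg (hatv_nonneg _)]; exact hatv_le_one _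
  calc min (M ^ (-α)) 1 = ∫ _, min (M ^ (-α)) 1 ∂μ := by simp
    _ ≤ ∫ x, hatv d α (f x) ∂μ :=
      integral_mono_ae (integrable_const _) hint (hfM.mono fun _ hx ↦ min_rpow_le_hatv hα hx)

end ShapeFunction

lemma abs_exp_neg_sub_exp_neg_le {u v w : ℝ} (hu : w ≤ u) (hv : w ≤ v) :
    |exp (-u) - exp (-v)| ≤ exp (-w) :=
  abs_sub_le_of_nonneg_of_le (exp_pos _).le (exp_le_exp.2 (neg_le_neg hu))
    (exp_pos _).le (exp_le_exp.2 (neg_le_neg hv))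

section Integrand

variable {d : ℕ} {α : ℝ} {μ : Measure (EuclideanSpace ℝ (Fin d))} [IsProbabilityMeasure μ]
  {R t r ρ : ℝ}

lemma abs_exp_hatv_sub_exp_integral_hatv_le (hα : 0 ≤ α)
    (hμ : μ (Metric.closedBall 0 R)ᶜ = 0) (hR : 0 ≤ R) (ht : 0 ≤ t) (hr : 0 ≤ r) (hρ : 1 ≤ ρ)
    {y : EuclideanSpace ℝ (Fin d)} (hy : ‖y‖ ≤ ρ) :
    |exp (-(t * hatv d α (r • y))) - exp (-(t * ∫ x, hatv d α (r • (x - y)) ∂μ))|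
      ≤ exp (-(t * min (((R + 1) * (r * ρ)) ^ (-α)) 1)) := by
  have hry : ‖r • y‖ ≤ (R + 1) * (r * ρ) := by
    rw [norm_smul, norm_of_nonneg hr]
    nlinarith [mul_le_mul_of_nonneg_left hy hr, mul_nonneg hR (mul_nonneg hr (zero_le_one.trans hρ))]
  have hrxy : ∀ᵐ x ∂μ, ‖r • (x - y)‖ ≤ (R + 1) * (r * ρ) := by
    filter_upwards [measure_eq_zero_iff_ae_notMem.1 hμ] with x hx
    have hxR : ‖x‖ ≤ R := by simpa using hx
    rw [norm_smul, norm_of_nonneg hr]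
    nlinarith [mul_le_mul_of_nonneg_left ((norm_sub_le x y).trans (add_le_add hxR hy)) hr,
      mul_le_mul_of_nonneg_left hρ (mul_nonneg hR hr)]
  refine abs_exp_neg_sub_exp_neg_le ?_ ?_ <;> gcongr
  · exact min_rpow_le_hatv hα hry
  · exact min_rpow_le_integral_hatv (by fun_prop) hα hrxy

lemma setIntegral_abs_exp_hatv_sub_exp_integral_hatv_le (hα : 0 ≤ α)
    (hμ : μ (Metric.closedBall 0 R)ᶜ = 0) (hR : 0 ≤ R) (ht : 0 ≤ t) (hr : 0 ≤ r) (hρ : 1 ≤ ρ) :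
    ∫ y in {y : EuclideanSpace ℝ (Fin d) | ‖y‖ ≤ ρ},
        |exp (-(t * hatv d α (r • y))) - exp (-(t * ∫ x, hatv d α (r • (x - y)) ∂μ))|
      ≤ ρ ^ d * volume.real (Metric.ball (0 : EuclideanSpace ℝ (Fin d)) 1)
        * exp (-(t * min (((R + 1) * (r * ρ)) ^ (-α)) 1)) := by
  have hball : {y : EuclideanSpace ℝ (Fin d) | ‖y‖ ≤ ρ} = Metric.closedBall 0 ρ := by
    ext; simp
  rw [hball]
  refine (le_abs_self _).trans ?_
  rw [← norm_eq_abs]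
  refine (norm_setIntegral_le_of_norm_le_const (C := exp (-(t * min (((R + 1) * (r * ρ)) ^ (-α)) 1)))
    measure_closedBall_lt_top fun y hy ↦ ?_).trans_eq ?_
  · rw [norm_eq_abs, abs_abs]
    exact abs_exp_hatv_sub_exp_integral_hatv_le hα hμ hR ht hr hρ (by simpa using hy)
  · rw [Measure.addHaar_real_closedBall _ _ (by linarith), finrank_euclideanSpace_fin]
    ring

end Integrand

lemma tendsto_rpow_mul_exp_neg_mul_rpow_atTop_nhds_zero (s : ℝ) {b c : ℝ} (hb : 0 < b)
    (hc : 0 < c) : Tendsto (fun t : ℝ ↦ t ^ s * exp (-(c * t ^ b))) atTop (𝓝 0) := by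
  refine ((tendsto_rpow_mul_exp_neg_mul_atTop_nhds_zero (s / b) c hc).comp
    (tendsto_rpow_atTop hb)).congr' ?_
  filter_upwards [eventually_ge_atTop 0] with t ht
  rw [Function.comp_apply, ← rpow_mul ht, mul_div_cancel₀ _ hb.ne', neg_mul]

lemma mul_rpow_le_mul_min {t b c s : ℝ} (ht : 1 ≤ t) (hb : b ≤ 1) (hc : c ≤ 1)
    (hts : t * s = t ^ b) : c * t ^ b ≤ t * min (c * s) 1 := by
  rw [mul_min_of_nonneg _ _ (by linarith), mul_left_comm, hts, mul_one]
  refine le_min le_rfl ?_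
  calc c * t ^ b ≤ t ^ b := mul_le_of_le_one_left (rpow_nonneg (by linarith) _) hc
    _ ≤ t ^ (1 : ℝ) := rpow_le_rpow_of_exponent_le ht hb
    _ = t := rpow_one t

lemma mul_rpow_mul_rpow_neg_eq {d α t : ℝ} (hα : 0 < α) (ht : 0 < t) :
    t * (t ^ ((α - d + 2) / (4 * α)) * t ^ ((d + 2 - α) / (4 * (α + 1)))) ^ (-α)
      = t ^ ((d + 2 - α) / (4 * (α + 1))) := by
  rw [← rpow_add ht, ← rpow_mul ht.le]
  conv_lhs => arg 1; rw [← rpow_one t]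
  rw [← rpow_add ht]
  congr 1
  field_simp
  ring

theorem stmt1_general (d : ℕ) (α R : ℝ) (hα₁ : (d : ℝ) < α) (hα₂ : α < d + 2)
    (hR : 0 < R) :
    ∀ ε > 0, ∃ T : ℝ, ∀ t ≥ T,
      ∀ μ : Measure (EuclideanSpace ℝ (Fin d)), IsProbabilityMeasure μ →
        μ (Metric.closedBall (0 : EuclideanSpace ℝ (Fin d)) R)ᶜ = 0 →
        t ^ (-(α + d - 2) / (2 * α)) * (t ^ ((α - d + 2) / (4 * α))) ^ (d : ℕ) *
            (∫ y in {y : EuclideanSpace ℝ (Fin d) |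
                ‖y‖ ≤ t ^ ((d + 2 - α) / (4 * (α + 1)))},
              |Real.exp (-(t * hatv d α ((t ^ ((α - d + 2) / (4 * α))) • y))) -
               Real.exp (-(t * ∫ x, hatv d α ((t ^ ((α - d + 2) / (4 * α))) • (x - y)) ∂μ))|)
          < ε := by
  have hα : 0 < α := (Nat.cast_nonneg d).trans_lt hα₁
  set a := (α - d + 2) / (4 * α)
  set b := (d + 2 - α) / (4 * (α + 1))
  have hb : 0 < b := div_pos (by linarith) (by linarith)
  have hb1 : b ≤ 1 := (div_le_one (by linarith)).2 (by linarith)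
  set c := (R + 1) ^ (-α)
  have hc : 0 < c := rpow_pos_of_pos (by linarith) _
  have hc1 : c ≤ 1 := rpow_le_one_of_one_le_of_nonpos (by linarith) (by linarith)
  set C := volume.real (Metric.ball (0 : EuclideanSpace ℝ (Fin d)) 1)
  set P := -(α + d - 2) / (2 * α) + a * d + b * d
  intro ε hε
  have hlim := (tendsto_rpow_mul_exp_neg_mul_rpow_atTop_nhds_zero P hb hc).const_mul C
  rw [mul_zero] at hlim
  obtain ⟨T, hT⟩ :=
    eventually_atTop.1 ((hlim.eventually (gt_mem_nhds hε)).and (eventually_ge_atTop 1))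
  refine ⟨T, fun t htT μ _ hμ ↦ ?_⟩
  obtain ⟨hlt, ht⟩ := hT t htT
  have ht0 : 0 < t := by linarith
  have hexponent : c * t ^ b ≤ t * min (((R + 1) * (t ^ a * t ^ b)) ^ (-α)) 1 := by
    rw [mul_rpow (by linarith) (by positivity)]
    exact mul_rpow_le_mul_min ht hb1 hc1 (mul_rpow_mul_rpow_neg_eq hα ht0)
  calc _ ≤ t ^ (-(α + d - 2) / (2 * α)) * (t ^ a) ^ d * ((t ^ b) ^ d * C * exp (-(c * t ^ b))) := by
        gcongr
        refine (setIntegral_abs_exp_hatv_sub_exp_integral_hatv_le hα.le hμ hR.le ht0.le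
          (by positivity) (one_le_rpow ht hb.le)).trans ?_
        gcongr
    _ = C * (t ^ P * exp (-(c * t ^ b))) := by
        simp only [P, rpow_add ht0, rpow_mul ht0.le, rpow_natCast]
        ring
    _ < ε := hlt

/-- The contribution of small `y`'s to the functional `J_t` is negligible, uniformly over
probability measures supported in the closed ball of radius `R`. -/
theorem stmt1 (d : ℕ) (hd : 1 ≤ d) (α R : ℝ) (hα₁ : (d : ℝ) < α) (hα₂ : α < d + 2)
    (hR : 0 < R) :
    ∀ ε > 0, ∃ T : ℝ, ∀ t ≥ T,
      ∀ μ : Measure (EuclideanSpace ℝ (Fin d)), IsProbabilityMeasure μ →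
        μ (Metric.closedBall (0 : EuclideanSpace ℝ (Fin d)) R)ᶜ = 0 →
        t ^ (-(α + d - 2) / (2 * α)) * (t ^ ((α - d + 2) / (4 * α))) ^ (d : ℕ) *
            (∫ y in {y : EuclideanSpace ℝ (Fin d) |
                ‖y‖ ≤ t ^ ((d + 2 - α) / (4 * (α + 1)))},
              |Real.exp (-(t * hatv d α ((t ^ ((α - d + 2) / (4 * α))) • y))) -
               Real.exp (-(t * ∫ x, hatv d α ((t ^ ((α - d + 2) / (4 * α))) • (x - y)) ∂μ))|)
          < ε :=
  stmt1_general d α R hα₁ hα₂ hR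
end

section
/- Let $d \ge 1$ be an integer and $\alpha > d$. Then for every $t > 0$, $\int_{\mathbb{R}^d} \bigl(1 - e^{-t |y|^{-\alpha}}\bigr)\,\mathrm{d}y = \omega_d\,\Gamma\bigl(\tfrac{\alpha-d}{\alpha}\bigr)\, t^{d/\alpha}$. -/
/-!
In polar coordinates the integral becomes `ω_d · d · ∫₀^∞ r^(d-1) (1 - e^(-t r^(-α))) dr`, and the
substitution `u = r^(-α)` turns the radial integral into `α⁻¹ ∫₀^∞ (1 - e^(-tu)) u^(-s-1) du` with
`s = d/α ∈ (0, 1)`. One integration by parts, differentiating `1 - e^(-tu)` and integrating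
`u^(-s-1)`, reduces this to the Gamma integral `(t/s) ∫₀^∞ u^(-s) e^(-tu) du = Γ(1 - s) t^s / s`.
-/

open MeasureTheory Real Filter Set Topology Module

section OneSubExp

variable {s t : ℝ}

lemma one_sub_exp_neg_nonneg {x : ℝ} (hx : 0 ≤ x) : 0 ≤ 1 - exp (-x) :=
  sub_nonneg.2 (exp_le_one_iff.2 (neg_nonpos.2 hx))

lemma one_sub_exp_neg_le (x : ℝ) : 1 - exp (-x) ≤ x := by
  linarith [one_sub_le_exp_neg x]

lemma integrableOn_one_sub_exp_neg_mul_mul_rpow_Ioi (hs₀ : 0 < s) (hs₁ : s < 1) (ht : 0 ≤ t) :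
    IntegrableOn (fun x ↦ (1 - exp (-(t * x))) * x ^ (-s - 1)) (Ioi 0) := by
  have hmeas : AEStronglyMeasurable (fun x : ℝ ↦ (1 - exp (-(t * x))) * x ^ (-s - 1)) := by
    fun_prop
  rw [← Ioc_union_Ioi_eq_Ioi zero_le_one]
  refine IntegrableOn.union ?_ ?_
  · refine Integrable.mono' ((intervalIntegral.intervalIntegrable_rpow' (r := -s)
      (by linarith)).1.const_mul t) hmeas.restrict ?_
    filter_upwards [ae_restrict_mem measurableSet_Ioc] with x hx
    have hx₀ : 0 < x := hx.1
    rw [norm_of_nonneg (mul_nonneg (one_sub_exp_neg_nonneg (by positivity)) (by positivity))]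
    calc (1 - exp (-(t * x))) * x ^ (-s - 1) ≤ t * x * x ^ (-s - 1) := by
          gcongr; exact one_sub_exp_neg_le _
      _ = t * x ^ (-s) := by
          rw [mul_assoc, ← rpow_one_add' hx₀.le (by linarith), add_sub_cancel]
  · refine Integrable.mono' (integrableOn_Ioi_rpow_of_lt (a := -s - 1) (by linarith) zero_lt_one)
      hmeas.restrict ?_
    filter_upwards [ae_restrict_mem measurableSet_Ioi] with x hx
    have hx₀ : 0 < x := zero_lt_one.trans hx
    rw [norm_of_nonneg (mul_nonneg (one_sub_exp_neg_nonneg (by positivity)) (by positivity))]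
    exact mul_le_of_le_one_left (by positivity) (by linarith [exp_pos (-(t * x))])

theorem integral_one_sub_exp_neg_mul_mul_rpow_Ioi (hs₀ : 0 < s) (hs₁ : s < 1) (ht : 0 < t) :
    ∫ x in Ioi 0, (1 - exp (-(t * x))) * x ^ (-s - 1) = Gamma (1 - s) * t ^ s / s := by
  have hu (x : ℝ) : HasDerivAt (fun x ↦ 1 - exp (-(t * x))) (exp (-(t * x)) * t) x := by
    simpa using (((hasDerivAt_id x).const_mul t).neg.exp).const_sub 1
  have hv : ∀ x ∈ Ioi (0 : ℝ), HasDerivAt (fun x ↦ -x ^ (-s) / s) (x ^ (-s - 1)) x := by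
    intro x hx
    refine ((hasDerivAt_rpow_const (p := -s) (Or.inl hx.ne')).neg.div_const s).congr_deriv ?_
    field_simp
  have hvu : EqOn (fun x ↦ exp (-(t * x)) * t * (-x ^ (-s) / s))
      (fun x ↦ -(t / s) * (x ^ (1 - s - 1) * exp (-(t * x)))) (Ioi 0) := fun x _ ↦ by
    simp only [sub_sub_cancel_left]
    ring
  have hvu_int : IntegrableOn (fun x ↦ exp (-(t * x)) * t * (-x ^ (-s) / s)) (Ioi 0) := by
    have h := integrableOn_rpow_mul_exp_neg_mul_rpow (s := -s) (p := 1) (by linarith) one_pos ht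
    simp only [rpow_one, neg_mul] at h
    simp only [sub_sub_cancel_left] at hvu
    exact IntegrableOn.congr_fun (h.const_mul _) hvu.symm measurableSet_Ioi
  have h_zero : Tendsto (fun x ↦ (1 - exp (-(t * x))) * (-x ^ (-s) / s)) (𝓝[>] 0) (𝓝 0) := by
    have h : Tendsto (fun x : ℝ ↦ t / s * x ^ (1 - s)) (𝓝[>] 0) (𝓝 0) := by
      have := ((continuous_rpow_const (q := 1 - s) (by linarith)).tendsto 0).const_mul (t / s)
      rw [zero_rpow (by linarith), mul_zero] at this
      exact this.mono_left nhdsWithin_le_nhds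
    refine squeeze_zero_norm' ?_ h
    filter_upwards [self_mem_nhdsWithin] with x (hx : 0 < x)
    rw [norm_mul, norm_div, norm_neg, norm_of_nonneg (one_sub_exp_neg_nonneg (by positivity)),
      norm_of_nonneg (by positivity), norm_of_nonneg hs₀.le]
    calc (1 - exp (-(t * x))) * (x ^ (-s) / s) ≤ t * x * (x ^ (-s) / s) := by
          gcongr; exact one_sub_exp_neg_le _
      _ = t / s * x ^ (1 - s) := by
          rw [sub_eq_add_neg, rpow_add hx, rpow_one]; ring
  have h_infty : Tendsto (fun x ↦ (1 - exp (-(t * x))) * (-x ^ (-s) / s)) atTop (𝓝 0) := by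
    have h := (tendsto_rpow_neg_atTop hs₀).div_const s
    rw [zero_div] at h
    refine squeeze_zero_norm' ?_ h
    filter_upwards [eventually_gt_atTop 0] with x hx
    rw [norm_mul, norm_div, norm_neg, norm_of_nonneg (one_sub_exp_neg_nonneg (by positivity)),
      norm_of_nonneg (by positivity), norm_of_nonneg hs₀.le]
    exact mul_le_of_le_one_left (by positivity) (by linarith [exp_pos (-(t * x))])
  rw [integral_Ioi_mul_deriv_eq_deriv_mul (fun x _ ↦ hu x) hv
    (integrableOn_one_sub_exp_neg_mul_mul_rpow_Ioi hs₀ hs₁ ht.le) hvu_int h_zero h_infty,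
    setIntegral_congr_fun measurableSet_Ioi hvu, integral_const_mul,
    integral_rpow_mul_exp_neg_mul_Ioi (by linarith) ht]
  have ht_pow : t ^ s = t * t ^ (-(1 - s)) := by
    rw [← rpow_one_add' ht.le (by linarith)]; ring_nf
  rw [one_div, inv_rpow ht.le, ← rpow_neg ht.le, ht_pow]
  ring

end OneSubExp

theorem integral_rpow_mul_one_sub_exp_neg_mul_rpow_neg_Ioi {p α t : ℝ} (hp : 0 < p) (hpα : p < α)
    (ht : 0 < t) :
    ∫ r in Ioi 0, r ^ (p - 1) * (1 - exp (-(t * r ^ (-α)))) =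
      Gamma ((α - p) / α) * t ^ (p / α) / p := by
  have hα : 0 < α := hp.trans hpα
  have hs₁ : p / α < 1 := (div_lt_one hα).2 hpα
  have h_subst := integral_comp_rpow_Ioi (fun u ↦ (1 - exp (-(t * u))) * u ^ (-(p / α) - 1))
    (neg_ne_zero.2 hα.ne')
  rw [integral_one_sub_exp_neg_mul_mul_rpow_Ioi (by positivity) hs₁ ht] at h_subst
  have h_integrand : EqOn (fun r ↦ r ^ (p - 1) * (1 - exp (-(t * r ^ (-α)))))
      (fun r ↦ α⁻¹ * ((|-α| * r ^ (-α - 1)) •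
        ((1 - exp (-(t * r ^ (-α)))) * (r ^ (-α)) ^ (-(p / α) - 1)))) (Ioi 0) := by
    intro r (hr : 0 < r)
    have h_exp : (-α) * (-(p / α) - 1) = p + α := by field_simp; ring
    simp only [smul_eq_mul, abs_neg, abs_of_pos hα, ← rpow_mul hr.le, h_exp]
    rw [show p - 1 = (-α - 1) + (p + α) by ring, rpow_add hr]
    field_simp
  rw [setIntegral_congr_fun measurableSet_Ioi h_integrand, integral_const_mul, h_subst,
    show (α - p) / α = 1 - p / α by field_simp]
  field_simp

theorem integral_one_sub_exp_neg_mul_norm_rpow_neg {E : Type*} [NormedAddCommGroup E]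
    [NormedSpace ℝ E] [FiniteDimensional ℝ E] [Nontrivial E] [MeasurableSpace E] [BorelSpace E]
    (μ : Measure E) [μ.IsAddHaarMeasure] {α t : ℝ} (hα : (finrank ℝ E : ℝ) < α)
    (ht : 0 < t) :
    ∫ y, 1 - exp (-(t * ‖y‖ ^ (-α))) ∂μ =
      μ.real (Metric.ball 0 1) * Gamma ((α - finrank ℝ E) / α) *
        t ^ ((finrank ℝ E : ℝ) / α) := by
  have hn : (0 : ℝ) < finrank ℝ E := Nat.cast_pos.2 finrank_pos
  have h_radial : EqOn (fun r : ℝ ↦ r ^ (finrank ℝ E - 1) • (1 - exp (-(t * r ^ (-α)))))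
      (fun r ↦ r ^ ((finrank ℝ E : ℝ) - 1) * (1 - exp (-(t * r ^ (-α))))) (Ioi 0) :=
    fun r _ ↦ by
      dsimp only
      rw [smul_eq_mul, ← rpow_natCast, Nat.cast_pred finrank_pos]
  rw [integral_fun_norm_addHaar μ fun r ↦ 1 - exp (-(t * r ^ (-α))),
    setIntegral_congr_fun measurableSet_Ioi h_radial,
    integral_rpow_mul_one_sub_exp_neg_mul_rpow_neg_Ioi hn hα ht, nsmul_eq_mul,
    smul_eq_mul]
  field_simp

open scoped Classical in
/-- Exact computation: `∫_{ℝ^d} (1 - e^{-t|y|^{-α}}) dy = ω_d Γ((α-d)/α) t^{d/α}`,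
the integrand being understood with value `1` at `y = 0`. -/
theorem stmt3 (d : ℕ) (hd : 1 ≤ d) (α : ℝ) (hα : (d : ℝ) < α) (t : ℝ) (ht : 0 < t) :
    ∫ y : EuclideanSpace ℝ (Fin d),
        (if y = 0 then (1 : ℝ) else 1 - Real.exp (-(t * ‖y‖ ^ (-α))))
      = (volume (Metric.ball (0 : EuclideanSpace ℝ (Fin d)) 1)).toReal *
          Real.Gamma ((α - d) / α) * t ^ ((d : ℝ) / α) := by
  have : Nonempty (Fin d) := ⟨⟨0, hd⟩⟩
  have h_ae : (fun y : EuclideanSpace ℝ (Fin d) ↦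
      if y = 0 then (1 : ℝ) else 1 - exp (-(t * ‖y‖ ^ (-α)))) =ᵐ[volume]
      fun y ↦ 1 - exp (-(t * ‖y‖ ^ (-α))) := by
    filter_upwards [volume.ae_ne 0] with y hy using if_neg hy
  rw [integral_congr_ae h_ae, integral_one_sub_exp_neg_mul_norm_rpow_neg volume (by simpa) ht,
    finrank_euclideanSpace_fin, measureReal_def]
end

section
/- Let $d \ge 1$ be an integer, $\alpha > 0$ and let $k$ be a real number with $k\alpha > d$. Then $\lim_{\rho \to \infty} \rho^{\,k - \frac{d}{\alpha}} \int_{\mathbb{R}^d} \hat v(y)^k\, e^{-\rho\, \hat v(y)}\,\mathrm{d}y = \frac{\sigma_d}{\alpha}\,\Gamma\bigl(\tfrac{k\alpha-d}{\alpha}\bigr)$. -/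
/-! Since `v̂` is radial and `v̂(y) = |y|^{-α}` for `|y| ≥ 1`, polar coordinates and the substitution
`|y| = x^{-1/α}` turn the integral into `σ_d/α · (∫₀¹ x^{β-1} e^{-ρx} dx + e^{-ρ} α/d)` with
`β = k - d/α > 0`. Rescaling `t = ρx` makes `ρ^β` times the first term the truncated Gamma integral
`∫₀^ρ t^{β-1} e^{-t} dt → Γ(β)`, while `ρ^β e^{-ρ} → 0`. -/

open MeasureTheory Real Filter
open scoped Classical

/-- Surface area of the unit sphere in `ℝ^d`: `σ_d = d · ω_d`. -/
noncomputable def sigmad (d : ℕ) : ℝ :=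
  d * (volume (Metric.ball (0 : EuclideanSpace ℝ (Fin d)) 1)).toReal

open Set

/-- Polar coordinates followed by the substitution `r = x ^ (-1/α)`. -/
lemma integral_comp_norm_rpow_neg {d : ℕ} (hd : 1 ≤ d) {α : ℝ} (hα : 0 < α) (f : ℝ → ℝ) :
    ∫ y : EuclideanSpace ℝ (Fin d), f (‖y‖ ^ (-α)) =
      sigmad d / α * ∫ x in Ioi (0 : ℝ), x ^ (-(d / α) - 1) * f x := by
  have : Nonempty (Fin d) := ⟨⟨0, hd⟩⟩
  have hp : -α⁻¹ ≠ 0 := neg_ne_zero.2 (inv_ne_zero hα.ne')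
  rw [integral_fun_norm_addHaar volume (fun r => f (r ^ (-α))), finrank_euclideanSpace_fin]
  simp only [smul_eq_mul]
  rw [← integral_comp_rpow_Ioi (fun r => r ^ (d - 1) * f (r ^ (-α))) hp]
  have hintegrand : ∀ x ∈ Ioi (0 : ℝ),
      (|-α⁻¹| * x ^ (-α⁻¹ - 1)) • ((x ^ (-α⁻¹)) ^ (d - 1) * f ((x ^ (-α⁻¹)) ^ (-α))) =
        α⁻¹ * (x ^ (-(d / α) - 1) * f x) := by
    intro x (hx : 0 < x)
    have hinv : (x ^ (-α⁻¹)) ^ (-α) = x := by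
      rw [← rpow_mul hx.le, neg_mul_neg, inv_mul_cancel₀ hα.ne', rpow_one]
    have hpow : x ^ (-α⁻¹ - 1) * (x ^ (-α⁻¹)) ^ (d - 1) = x ^ (-(d / α) - 1) := by
      rw [← rpow_natCast, ← rpow_mul hx.le, ← rpow_add hx, Nat.cast_sub hd, Nat.cast_one]
      congr 1
      field_simp
      ring
    rw [hinv, smul_eq_mul, abs_neg, abs_of_pos (inv_pos.2 hα), ← hpow]
    ring
  rw [setIntegral_congr_fun measurableSet_Ioi hintegrand, integral_const_mul, sigmad,
    measureReal_def]
  ring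

lemma integral_comp_hatv {d : ℕ} (hd : 1 ≤ d) {α : ℝ} (hα : 0 < α) (g : ℝ → ℝ) :
    ∫ y, g (hatv d α y) =
      sigmad d / α * ∫ x in Ioi (0 : ℝ), x ^ (-(d / α) - 1) * g (min x 1) := by
  have : Nonempty (Fin d) := ⟨⟨0, hd⟩⟩
  rw [← integral_comp_norm_rpow_neg hd hα (fun t => g (min t 1))]
  refine integral_congr_ae ?_
  filter_upwards [volume.ae_ne 0] with y hy
  simp [hatv, hy]

lemma integral_Ioi_rpow_mul_comp_min_one {γ : ℝ} (hγ : 0 < γ) {h : ℝ → ℝ}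
    (hint : IntervalIntegrable (fun x => x ^ (-γ - 1) * h x) volume 0 1) :
    ∫ x in Ioi (0 : ℝ), x ^ (-γ - 1) * h (min x 1) =
      (∫ x in (0 : ℝ)..1, x ^ (-γ - 1) * h x) + h 1 / γ := by
  have hlt : -γ - 1 < -1 := by linarith
  have hbelow : EqOn (fun x => x ^ (-γ - 1) * h (min x 1)) (fun x => x ^ (-γ - 1) * h x)
      (uIcc 0 1) := by
    intro x hx
    rw [uIcc_of_le zero_le_one] at hx
    simp only [min_eq_left hx.2]
  have habove : EqOn (fun x => x ^ (-γ - 1) * h (min x 1)) (fun x => h 1 * x ^ (-γ - 1))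
      (Ioi 1) := by
    intro x (hx : 1 < x)
    simp only [min_eq_right hx.le, mul_comm]
  have htail : IntegrableOn (fun x => h 1 * x ^ (-γ - 1)) (Ioi 1) :=
    (integrableOn_Ioi_rpow_of_lt hlt one_pos).const_mul _
  rw [← intervalIntegral.integral_interval_add_Ioi'
      (hint.congr (hbelow.symm.mono uIoc_subset_uIcc))
      (htail.congr_fun habove.symm measurableSet_Ioi),
    intervalIntegral.integral_congr hbelow, setIntegral_congr_fun measurableSet_Ioi habove,
    integral_const_mul, integral_Ioi_rpow_of_lt hlt one_pos]
  simp only [one_rpow, sub_add_cancel]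
  field_simp

lemma rpow_mul_integral_rpow_mul_exp_neg_mul {ρ : ℝ} (hρ : 0 < ρ) (β : ℝ) :
    ρ ^ β * ∫ x in (0 : ℝ)..1, x ^ (β - 1) * exp (-(ρ * x)) =
      ∫ t in (0 : ℝ)..ρ, exp (-t) * t ^ (β - 1) := by
  have hscale : EqOn (fun x => ρ ^ (β - 1) * (x ^ (β - 1) * exp (-(ρ * x))))
      (fun x => exp (-(ρ * x)) * (ρ * x) ^ (β - 1)) (uIcc 0 1) := by
    intro x hx
    rw [uIcc_of_le zero_le_one] at hx
    simp only [mul_rpow hρ.le hx.1]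
    ring
  calc ρ ^ β * ∫ x in (0 : ℝ)..1, x ^ (β - 1) * exp (-(ρ * x))
      = ρ * ∫ x in (0 : ℝ)..1, ρ ^ (β - 1) * (x ^ (β - 1) * exp (-(ρ * x))) := by
        rw [intervalIntegral.integral_const_mul, rpow_sub_one hρ.ne']
        field_simp
    _ = ∫ t in (0 : ℝ)..ρ, exp (-t) * t ^ (β - 1) := by
        rw [intervalIntegral.integral_congr hscale,
          intervalIntegral.integral_comp_mul_left (fun t => exp (-t) * t ^ (β - 1)) hρ.ne',
          mul_zero, mul_one, smul_eq_mul, mul_inv_cancel_left₀ hρ.ne']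

lemma tendsto_intervalIntegral_exp_neg_mul_rpow_Gamma {s : ℝ} (hs : 0 < s) :
    Tendsto (fun ρ => ∫ t in (0 : ℝ)..ρ, exp (-t) * t ^ (s - 1)) atTop (nhds (Gamma s)) := by
  rw [Gamma_eq_integral hs]
  exact intervalIntegral_tendsto_integral_Ioi 0 (GammaIntegral_convergent hs) tendsto_id

lemma intervalIntegrable_rpow_mul_exp_neg_mul {β : ℝ} (hβ : 0 < β) (ρ : ℝ) :
    IntervalIntegrable (fun x => x ^ (β - 1) * exp (-(ρ * x))) volume 0 1 :=
  (intervalIntegral.intervalIntegrable_rpow' (by linarith)).mul_continuousOn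
    (by fun_prop)

lemma rpow_mul_integral_hatv_eq {d : ℕ} (hd : 1 ≤ d) {α k : ℝ} (hα : 0 < α)
    (hk : (d : ℝ) < k * α) {ρ : ℝ} (hρ : 0 < ρ) :
    ρ ^ (k - d / α) * ∫ y, hatv d α y ^ k * exp (-(ρ * hatv d α y)) =
      sigmad d / α * ((∫ t in (0 : ℝ)..ρ, exp (-t) * t ^ (k - d / α - 1)) +
        ρ ^ (k - d / α) * exp (-ρ) / (d / α)) := by
  have hγ : 0 < (d : ℝ) / α := div_pos (by exact_mod_cast hd) hα
  have hβ : 0 < k - d / α := by rw [sub_pos, div_lt_iff₀ hα]; exact hk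
  have hpow : EqOn (fun x => x ^ (-(d / α) - 1) * (x ^ k * exp (-(ρ * x))))
      (fun x => x ^ (k - d / α - 1) * exp (-(ρ * x))) (uIoc 0 1) := by
    intro x hx
    rw [uIoc_of_le zero_le_one] at hx
    dsimp only
    rw [← mul_assoc, ← rpow_add hx.1]
    ring_nf
  have hint := (intervalIntegrable_rpow_mul_exp_neg_mul hβ ρ).congr hpow.symm
  rw [integral_comp_hatv hd hα (fun t => t ^ k * exp (-(ρ * t))),
    integral_Ioi_rpow_mul_comp_min_one hγ hint,
    intervalIntegral.integral_congr_ae (ae_of_all _ hpow),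
    one_rpow, one_mul, mul_one, ← rpow_mul_integral_rpow_mul_exp_neg_mul hρ]
  ring

/-- `ρ^{k - d/α} ∫ v̂(y)^k e^{-ρ v̂(y)} dy → (σ_d/α) Γ((kα-d)/α)` as `ρ → ∞`. -/
theorem stmt6 (d : ℕ) (hd : 1 ≤ d) (α k : ℝ) (hα : 0 < α) (hk : (d : ℝ) < k * α) :
    Filter.Tendsto
      (fun ρ : ℝ => ρ ^ (k - (d : ℝ) / α) *
        ∫ y : EuclideanSpace ℝ (Fin d), hatv d α y ^ k * Real.exp (-(ρ * hatv d α y)))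
      atTop (nhds (sigmad d / α * Real.Gamma ((k * α - d) / α))) := by
  have hβ : 0 < k - d / α := by rw [sub_pos, div_lt_iff₀ hα]; exact hk
  rw [show (k * α - d) / α = k - d / α by field_simp]
  have hexp := (tendsto_rpow_mul_exp_neg_mul_atTop_nhds_zero (k - d / α) 1 one_pos).div_const
    (d / α)
  have hlim := ((tendsto_intervalIntegral_exp_neg_mul_rpow_Gamma hβ).add hexp).const_mul
    (sigmad d / α)
  rw [zero_div, add_zero] at hlim
  refine hlim.congr' ?_
  filter_upwards [eventually_gt_atTop 0] with ρ hρ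
  rw [rpow_mul_integral_hatv_eq hd hα hk hρ, neg_one_mul]
end

section
/- Let $d \ge 1$ be an integer and $\alpha > d$. Then for every real $\theta$, $\lim_{\rho \to \infty} \int_{\mathbb{R}^d} \Bigl( e^{\sqrt{-1}\,\theta\, \rho^{\frac{2\alpha-d}{2\alpha}} \hat v(y)} - 1 - \sqrt{-1}\,\theta\, \rho^{\frac{2\alpha-d}{2\alpha}} \hat v(y) \Bigr)\, e^{-\rho\,\hat v(y)}\,\mathrm{d}y \;=\; -\frac{\theta^2}{2}\cdot\frac{\sigma_d}{\alpha}\,\Gamma\bigl(\tfrac{2\alpha-d}{\alpha}\bigr)$, where the integral is a complex-valued Lebesgue integral. -/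
open MeasureTheory Real Filter
open scoped Classical

/-!
Substituting `y = ρ^{1/α} z` turns the integral into
`ρ^{d/α} ∫ (e^{iθεw} - 1 - iθεw) e^{-w} dz` with `ε = ρ^{-d/(2α)}` and `w = min(|z|^{-α}, ρ)`.
Since `ρ^{d/α} ε² = 1` and `|e^{ix} - 1 - ix| ≤ 2x²`, the integrand is dominated by a multiple of
`w² e^{-w} ≲ (1 + |z|)^{-2α}`, which is integrable because `2α > d`; pointwise it tends to
`-(θ²/2) |z|^{-2α} e^{-|z|^{-α}}` because `e^{ix} - 1 - ix = -x²/2 + O(|x|³)`. Polar coordinates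
and `t = r^{-α}` evaluate the limit integral as `-(θ²/2) (σ_d/α) Γ(2 - d/α)`.
-/

open Module Set Metric
open scoped Topology

section ExpBounds

open Complex

theorem norm_exp_I_mul_sub_one_sub_le (x : ℝ) : ‖cexp (I * x) - 1 - I * x‖ ≤ 2 * x ^ 2 := by
  have hIx : ‖I * x‖ = |x| := by simp
  rcases le_or_gt |x| 1 with hx | hx
  · calc ‖cexp (I * x) - 1 - I * x‖ ≤ ‖I * x‖ ^ 2 := norm_exp_sub_one_sub_id_le (hIx ▸ hx)
      _ ≤ 2 * x ^ 2 := by rw [hIx, sq_abs]; nlinarith [sq_nonneg x]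
  · calc ‖cexp (I * x) - 1 - I * x‖ ≤ ‖cexp (I * x) - 1‖ + ‖I * x‖ := norm_sub_le _ _
      _ ≤ |x| + |x| := by rw [hIx]; gcongr; exact Real.norm_exp_I_mul_ofReal_sub_one_le
      _ ≤ 2 * x ^ 2 := by nlinarith [sq_abs x]

theorem norm_exp_I_mul_sub_one_sub_add_sq_le (x : ℝ) :
    ‖cexp (I * x) - 1 - I * x + x ^ 2 / 2‖ ≤ |x| ^ 3 * rexp |x| := by
  have hIx : ‖I * x‖ = |x| := by simp
  have hsum : ∑ m ∈ Finset.range 3, (I * x) ^ m / m.factorial = 1 + I * x - x ^ 2 / 2 := by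
    simp [Finset.sum_range_succ, mul_pow]; ring
  have h := norm_exp_sub_sum_le_norm_mul_exp (I * x) 3
  rwa [hsum, hIx, ← sub_add, ← sub_sub] at h

theorem tendsto_exp_I_mul_sub_one_sub_div_sq (a : ℝ) :
    Tendsto (fun ε : ℝ => ((ε ^ 2)⁻¹ : ℝ) • (cexp (I * (ε * a : ℝ)) - 1 - I * (ε * a : ℝ)))
      (𝓝[≠] 0) (𝓝 (-(a ^ 2 / 2 : ℝ) : ℂ)) := by
  have hbound : Tendsto (fun ε : ℝ => |ε| * (|a| ^ 3 * rexp |ε * a|)) (𝓝[≠] 0) (𝓝 0) := by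
    have := ((by fun_prop : Continuous fun ε : ℝ => |ε| * (|a| ^ 3 * rexp |ε * a|))).tendsto 0
    simpa using this.mono_left nhdsWithin_le_nhds
  refine tendsto_iff_norm_sub_tendsto_zero.mpr <| squeeze_zero' (.of_forall fun _ => norm_nonneg _)
    (eventually_nhdsWithin_of_forall fun ε (hε : ε ≠ 0) => ?_) hbound
  have hεc : (ε : ℂ) ≠ 0 := ofReal_ne_zero.mpr hε
  calc _ = ‖((ε ^ 2)⁻¹ : ℝ) • (cexp (I * (ε * a : ℝ)) - 1 - I * (ε * a : ℝ) +
        ((ε * a : ℝ) : ℂ) ^ 2 / 2)‖ := by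
        rw [real_smul, real_smul]; push_cast; field_simp; ring_nf
    _ ≤ (ε ^ 2)⁻¹ * (|ε * a| ^ 3 * rexp |ε * a|) := by
        rw [norm_smul, norm_of_nonneg (by positivity)]
        gcongr
        exact norm_exp_I_mul_sub_one_sub_add_sq_le _
    _ = |ε| * (|a| ^ 3 * rexp |ε * a|) := by
        rw [abs_mul, ← sq_abs ε]; field_simp

end ExpBounds

theorem sq_mul_exp_neg_le_of_le_rpow_neg {a n w : ℝ} (ha : 0 < a) (hn : 0 ≤ n) (hw0 : 0 ≤ w)
    (hw : w ≤ n ^ (-a)) : w ^ 2 * rexp (-w) ≤ 2 ^ (2 * a + 1) * (1 + n) ^ (-(2 * a)) := by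
  have h1n : 0 < 1 + n := by linarith
  rw [rpow_neg h1n.le, ← div_eq_mul_inv, le_div_iff₀ (by positivity), rpow_add_one two_ne_zero]
  rcases le_or_gt n 1 with hn1 | hn1
  · have hsq : w ^ 2 * rexp (-w) ≤ 2 := by
      rw [Real.exp_neg, ← div_eq_mul_inv, div_le_iff₀ (exp_pos w)]
      nlinarith [quadratic_le_exp_of_nonneg hw0]
    have hpow : (1 + n) ^ (2 * a) ≤ 2 ^ (2 * a) := by gcongr; linarith
    nlinarith [exp_pos (-w), rpow_pos_of_pos h1n (2 * a)]
  · have hn0 : 0 < n := by linarith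
    have hsq : w ^ 2 * rexp (-w) ≤ (n ^ (2 * a))⁻¹ := by
      calc w ^ 2 * rexp (-w) ≤ (n ^ (-a)) ^ 2 * 1 := by
            gcongr; exact exp_le_one_iff.mpr (by linarith)
        _ = (n ^ (2 * a))⁻¹ := by
            rw [mul_one, ← rpow_natCast, ← rpow_mul hn0.le, ← rpow_neg hn0.le]; ring_nf
    have hpow : (1 + n) ^ (2 * a) ≤ 2 ^ (2 * a) * n ^ (2 * a) := by
      rw [← mul_rpow zero_le_two hn0.le]; gcongr; linarith
    have hpos := rpow_pos_of_pos hn0 (2 * a)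
    calc w ^ 2 * rexp (-w) * (1 + n) ^ (2 * a)
        ≤ (n ^ (2 * a))⁻¹ * (2 ^ (2 * a) * n ^ (2 * a)) := by gcongr
      _ = 2 ^ (2 * a) := by field_simp
      _ ≤ 2 ^ (2 * a) * 2 := by nlinarith [rpow_pos_of_pos two_pos (2 * a)]

noncomputable def chfIntegrand (θ ε w : ℝ) : ℂ :=
  (Complex.exp (Complex.I * θ * ((ε * w : ℝ) : ℂ)) - 1 - Complex.I * θ * ((ε * w : ℝ) : ℂ)) *
    Complex.exp (-(w : ℂ))

open Complex in
theorem chfIntegrand_eq (θ ε w : ℝ) :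
    chfIntegrand θ ε w =
      (cexp (I * ((ε * θ) * w : ℝ)) - 1 - I * ((ε * θ) * w : ℝ)) * (rexp (-w) : ℂ) := by
  rw [chfIntegrand, ofReal_exp, ofReal_neg]
  push_cast
  ring_nf

@[fun_prop]
theorem continuous_chfIntegrand (θ ε : ℝ) : Continuous (chfIntegrand θ ε) := by
  unfold chfIntegrand; fun_prop

theorem norm_chfIntegrand_le (θ ε w : ℝ) :
    ‖chfIntegrand θ ε w‖ ≤ 2 * (θ * ε) ^ 2 * (w ^ 2 * rexp (-w)) := by
  rw [chfIntegrand_eq, norm_mul, Complex.norm_real, norm_of_nonneg (exp_pos _).le]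
  calc _ ≤ 2 * (ε * θ * w) ^ 2 * rexp (-w) := by
        gcongr; exact norm_exp_I_mul_sub_one_sub_le _
    _ = _ := by ring

theorem tendsto_chfIntegrand (θ w : ℝ) :
    Tendsto (fun ε : ℝ => ((ε ^ 2)⁻¹ : ℝ) • chfIntegrand θ ε w) (𝓝[≠] 0)
      (𝓝 ((-(θ ^ 2 / 2) * (w ^ 2 * rexp (-w)) : ℝ) : ℂ)) := by
  have h := (tendsto_exp_I_mul_sub_one_sub_div_sq (θ * w)).mul_const ((rexp (-w) : ℝ) : ℂ)
  convert h using 2 with ε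
  · rw [chfIntegrand_eq, smul_mul_assoc]; ring_nf
  · push_cast; ring

theorem inv_sq_rpow_neg_half {ρ : ℝ} (hρ : 0 < ρ) (γ : ℝ) :
    ((ρ ^ (-(γ / 2))) ^ 2)⁻¹ = ρ ^ γ := by
  rw [← rpow_natCast, ← rpow_mul hρ.le, ← rpow_neg hρ.le]; ring_nf

theorem norm_rpow_smul_chfIntegrand_le {ρ : ℝ} (hρ : 0 < ρ) (θ γ w : ℝ) :
    ‖ρ ^ γ • chfIntegrand θ (ρ ^ (-(γ / 2))) w‖ ≤ 2 * θ ^ 2 * (w ^ 2 * rexp (-w)) := by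
  rw [norm_smul, norm_of_nonneg (rpow_nonneg hρ.le _)]
  calc _ ≤ ρ ^ γ * (2 * (θ * ρ ^ (-(γ / 2))) ^ 2 * (w ^ 2 * rexp (-w))) := by
        gcongr; exact norm_chfIntegrand_le _ _ _
    _ = 2 * θ ^ 2 * (w ^ 2 * rexp (-w)) := by
        rw [← inv_sq_rpow_neg_half hρ γ]; field_simp

theorem tendsto_rpow_smul_chfIntegrand (θ : ℝ) {γ : ℝ} (hγ : 0 < γ) (w : ℝ) :
    Tendsto (fun ρ : ℝ => ρ ^ γ • chfIntegrand θ (ρ ^ (-(γ / 2))) (min w ρ)) atTop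
      (𝓝 ((-(θ ^ 2 / 2) * (w ^ 2 * rexp (-w)) : ℝ) : ℂ)) := by
  have hε : Tendsto (fun ρ : ℝ => ρ ^ (-(γ / 2))) atTop (𝓝[≠] 0) :=
    tendsto_nhdsWithin_of_tendsto_nhds_of_eventually_within _
      (tendsto_rpow_neg_atTop (by positivity))
      ((eventually_gt_atTop 0).mono fun ρ hρ => (rpow_pos_of_pos hρ _).ne')
  refine ((tendsto_chfIntegrand θ w).comp hε).congr' ?_
  filter_upwards [eventually_gt_atTop 0, eventually_ge_atTop w] with ρ hρ hρw
  rw [Function.comp_apply, min_eq_left hρw, inv_sq_rpow_neg_half hρ]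

theorem tendsto_integral_rpow_smul_chfIntegrand {E : Type*} [NormedAddCommGroup E]
    [NormedSpace ℝ E] [FiniteDimensional ℝ E] [MeasurableSpace E] [BorelSpace E]
    (μ : Measure E) [μ.IsAddHaarMeasure] (θ : ℝ) {α γ : ℝ} (hα : (finrank ℝ E : ℝ) < 2 * α)
    (hγ : 0 < γ) :
    Tendsto (fun ρ : ℝ => ∫ z, ρ ^ γ • chfIntegrand θ (ρ ^ (-(γ / 2))) (min (‖z‖ ^ (-α)) ρ) ∂μ)
      atTop
      (𝓝 (∫ z, ((-(θ ^ 2 / 2) * ((‖z‖ ^ (-α)) ^ 2 * rexp (-‖z‖ ^ (-α))) : ℝ) : ℂ) ∂μ)) := by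
  have hα0 : 0 < α := by linarith [(Nat.cast_nonneg (finrank ℝ E) : (0 : ℝ) ≤ _)]
  refine tendsto_integral_filter_of_dominated_convergence
    (fun z => 2 * θ ^ 2 * (2 ^ (2 * α + 1) * (1 + ‖z‖) ^ (-(2 * α)))) ?_ ?_ ?_
    (.of_forall fun z => tendsto_rpow_smul_chfIntegrand θ hγ _)
  · exact .of_forall fun ρ => (by fun_prop : Measurable _).aestronglyMeasurable
  · filter_upwards [eventually_gt_atTop 0] with ρ hρ
    refine .of_forall fun z => (norm_rpow_smul_chfIntegrand_le hρ θ γ _).trans ?_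
    exact mul_le_mul_of_nonneg_left (sq_mul_exp_neg_le_of_le_rpow_neg hα0 (norm_nonneg z)
      (le_min (rpow_nonneg (norm_nonneg z) _) hρ.le) (min_le_left _ _)) (by positivity)
  · exact ((integrable_one_add_norm hα).const_mul _).const_mul _

theorem integral_comp_norm_rpow_neg_s8 {E F : Type*} [NormedAddCommGroup E] [NormedSpace ℝ E]
    [Nontrivial E] [FiniteDimensional ℝ E] [MeasurableSpace E] [BorelSpace E]
    (μ : Measure E) [μ.IsAddHaarMeasure] [NormedAddCommGroup F] [NormedSpace ℝ F]
    (g : ℝ → F) {α : ℝ} (hα : 0 < α) :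
    ∫ x, g (‖x‖ ^ (-α)) ∂μ = finrank ℝ E • μ.real (ball 0 1) •
      ∫ t in Ioi 0, (α⁻¹ * t ^ (-(finrank ℝ E / α) - 1)) • g t := by
  rw [integral_fun_norm_addHaar μ (fun r => g (r ^ (-α))),
    ← integral_comp_rpow_Ioi (fun t => (α⁻¹ * t ^ (-(finrank ℝ E / α) - 1)) • g t)
      (neg_ne_zero.mpr hα.ne')]
  congr 2
  refine setIntegral_congr_fun measurableSet_Ioi fun r (hr : 0 < r) => ?_
  rw [smul_smul]
  congr 1
  rw [abs_neg, abs_of_pos hα, ← rpow_mul hr.le, mul_mul_mul_comm, mul_inv_cancel₀ hα.ne', one_mul,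
    ← rpow_add hr, ← rpow_natCast, Nat.cast_sub Module.finrank_pos, Nat.cast_one]
  congr 1
  field_simp
  ring

theorem integral_norm_rpow_neg_sq_mul_exp {E : Type*} [NormedAddCommGroup E] [NormedSpace ℝ E]
    [Nontrivial E] [FiniteDimensional ℝ E] [MeasurableSpace E] [BorelSpace E]
    (μ : Measure E) [μ.IsAddHaarMeasure] {α : ℝ} (hα : (finrank ℝ E : ℝ) < 2 * α) :
    ∫ x, (‖x‖ ^ (-α)) ^ 2 * rexp (-‖x‖ ^ (-α)) ∂μ =
      finrank ℝ E * μ.real (ball 0 1) / α * Gamma (2 - finrank ℝ E / α) := by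
  have hα0 : 0 < α := by linarith [(Nat.cast_nonneg (finrank ℝ E) : (0 : ℝ) ≤ _)]
  rw [integral_comp_norm_rpow_neg_s8 μ (fun t => t ^ 2 * rexp (-t)) hα0,
    Gamma_eq_integral (by rw [sub_pos, div_lt_iff₀ hα0]; linarith), ← integral_const_mul]
  simp only [nsmul_eq_mul, smul_eq_mul]
  rw [← integral_const_mul, ← integral_const_mul]
  refine setIntegral_congr_fun measurableSet_Ioi fun t (ht : 0 < t) => ?_
  rw [← rpow_two]
  have : t ^ (-(finrank ℝ E / α) - 1) * t ^ (2 : ℝ) = t ^ (2 - finrank ℝ E / α - 1) := by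
    rw [← rpow_add ht]; ring_nf
  calc _ = finrank ℝ E * μ.real (ball 0 1) / α * (rexp (-t) *
        (t ^ (-(finrank ℝ E / α) - 1) * t ^ (2 : ℝ))) := by ring
    _ = _ := by rw [this]

theorem mul_hatv_rpow_smul {d : ℕ} {α ρ : ℝ} (hα : α ≠ 0) (hρ : 0 < ρ)
    {z : EuclideanSpace ℝ (Fin d)} (hz : z ≠ 0) :
    ρ * hatv d α (ρ ^ α⁻¹ • z) = min (‖z‖ ^ (-α)) ρ := by
  have hc : 0 < ρ ^ α⁻¹ := rpow_pos_of_pos hρ _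
  rw [hatv, if_neg (smul_ne_zero hc.ne' hz), norm_smul, norm_of_nonneg hc.le,
    mul_rpow hc.le (norm_nonneg z), ← rpow_mul hρ.le, mul_min_of_nonneg _ _ hρ.le,
    show α⁻¹ * -α = -1 by field_simp, rpow_neg_one, ← mul_assoc, mul_inv_cancel₀ hρ.ne', one_mul,
    mul_one]

theorem integral_chfIntegrand_hatv {d : ℕ} [Nontrivial (EuclideanSpace ℝ (Fin d))] {α ρ : ℝ}
    (hα : α ≠ 0) (hρ : 0 < ρ) (θ ε : ℝ) :
    ∫ y, chfIntegrand θ ε (ρ * hatv d α y) =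
      ∫ z : EuclideanSpace ℝ (Fin d), ρ ^ (d / α) • chfIntegrand θ ε (min (‖z‖ ^ (-α)) ρ) := by
  have hR : 0 < ρ ^ α⁻¹ := rpow_pos_of_pos hρ _
  have hRd : (ρ ^ α⁻¹) ^ d = ρ ^ (d / α) := by
    rw [← rpow_natCast, ← rpow_mul hρ.le, inv_mul_eq_div]
  calc ∫ y, chfIntegrand θ ε (ρ * hatv d α y)
      = (ρ ^ α⁻¹) ^ d • ∫ z, chfIntegrand θ ε (ρ * hatv d α (ρ ^ α⁻¹ • z)) := by
        rw [Measure.integral_comp_smul_of_nonneg volume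
          (fun y => chfIntegrand θ ε (ρ * hatv d α y)) _ (hR := hR.le),
          finrank_euclideanSpace_fin, smul_smul, mul_inv_cancel₀ (pow_ne_zero _ hR.ne'), one_smul]
    _ = _ := by
        rw [hRd, ← integral_smul]
        refine integral_congr_ae ?_
        filter_upwards [compl_mem_ae_iff.mpr (measure_singleton 0)] with z hz
        rw [mul_hatv_rpow_smul hα hρ hz]

theorem chfIntegrand_rpow {ρ : ℝ} (hρ : 0 < ρ) {α : ℝ} (hα : α ≠ 0) (d θ v : ℝ) :
    (Complex.exp (Complex.I * θ * ((ρ ^ ((2 * α - d) / (2 * α)) * v : ℝ) : ℂ)) - 1 -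
      Complex.I * θ * ((ρ ^ ((2 * α - d) / (2 * α)) * v : ℝ) : ℂ)) *
        Complex.exp (-((ρ * v : ℝ) : ℂ)) = chfIntegrand θ (ρ ^ (-(d / α / 2))) (ρ * v) := by
  have : ρ ^ (-(d / α / 2)) * (ρ * v) = ρ ^ ((2 * α - d) / (2 * α)) * v := by
    rw [← mul_assoc, ← rpow_add_one hρ.ne']
    congr 2
    field_simp
    ring
  rw [chfIntegrand, this]

/-- The centered characteristic-function integral converges:
`∫ (e^{iθρ^{(2α-d)/(2α)} v̂(y)} - 1 - iθρ^{(2α-d)/(2α)} v̂(y)) e^{-ρ v̂(y)} dy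
  → -(θ²/2)(σ_d/α)Γ((2α-d)/α)` as `ρ → ∞`. -/
theorem stmt8 (d : ℕ) (hd : 1 ≤ d) (α : ℝ) (hα : (d : ℝ) < α) (θ : ℝ) :
    Filter.Tendsto
      (fun ρ : ℝ =>
        ∫ y : EuclideanSpace ℝ (Fin d),
          (Complex.exp (Complex.I * (θ : ℂ) *
              ((ρ ^ ((2 * α - d) / (2 * α)) * hatv d α y : ℝ) : ℂ)) - 1 -
            Complex.I * (θ : ℂ) * ((ρ ^ ((2 * α - d) / (2 * α)) * hatv d α y : ℝ) : ℂ)) *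
            Complex.exp (-((ρ * hatv d α y : ℝ) : ℂ)))
      atTop
      (nhds ((-(θ ^ 2 / 2) * (sigmad d / α * Real.Gamma ((2 * α - d) / α)) : ℝ) : ℂ)) := by
  have hα0 : 0 < α := lt_of_le_of_lt d.cast_nonneg hα
  have : Nontrivial (EuclideanSpace ℝ (Fin d)) :=
    Module.nontrivial_of_finrank_pos (R := ℝ) (by rw [finrank_euclideanSpace_fin]; omega)
  have hdim : (Module.finrank ℝ (EuclideanSpace ℝ (Fin d)) : ℝ) < 2 * α := by
    rw [finrank_euclideanSpace_fin]; linarith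
  have hlim := tendsto_integral_rpow_smul_chfIntegrand volume θ hdim
    (div_pos (Nat.cast_pos.mpr hd) hα0)
  rw [integral_complex_ofReal, integral_const_mul, integral_norm_rpow_neg_sq_mul_exp volume hdim,
    finrank_euclideanSpace_fin] at hlim
  have hval : (2 * α - d) / α = 2 - d / α := by field_simp
  rw [sigmad, ← measureReal_def, hval]
  refine hlim.congr' ?_
  filter_upwards [eventually_gt_atTop 0] with ρ hρ
  simp only [chfIntegrand_rpow hρ hα0.ne', integral_chfIntegrand_hatv hα0.ne' hρ]
end

section
/- Let $d \ge 1$ be an integer, $\alpha \in (d, d+2)$, and let $c_0, M > 0$ and $\gamma > d$. For $t > 1$ set $\rho(t) = c_0 (\log t)^{\alpha/d}$ and let $B_{2M}(t)$ be the open ball in $\mathbb{R}^d$ of radius $2M(\log t)^{(\alpha-d+2)/(4d)}$ centered at the origin. Then $\int_{\mathbb{R}^d \setminus B_{2M}(t)} |y|^{-\gamma}\, e^{-\rho(t)\,\hat v(y)}\,\mathrm{d}y = O\bigl((\log t)^{\frac{d-\gamma}{d}}\bigr)$ as $t \to \infty$. -/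
open MeasureTheory Real Filter Asymptotics
open scoped Classical

/-!
Outside the unit ball `v̂(y) = |y|^{-α}`, so once the radius of `B_{2M}(t)` exceeds `1` the
integral is at most the integral over all of `ℝ^d` of `|y|^{-γ} exp(-ρ |y|^{-α})`. This function
is integrable (the exponential kills the singularity at `0`, and `γ > d` handles infinity), and
the substitution `y = ρ^{1/α} z` shows that its integral is `ρ^{(d-γ)/α}` times a constant;
with `ρ = c₀ (log t)^{α/d}` this is a constant times `(log t)^{(d-γ)/d}`.
-/

noncomputable section

open Module
open scoped Nat

lemma pow_mul_exp_neg_mul_le {c w : ℝ} (hc : 0 < c) (hw : 0 ≤ w) (n : ℕ) :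
    w ^ n * exp (-(c * w)) ≤ n ! / c ^ n := by
  have h := pow_div_factorial_le_exp _ (mul_nonneg hc.le hw) n
  rw [div_le_iff₀ (by positivity), mul_pow] at h
  rw [exp_neg, le_div_iff₀ (by positivity)]
  calc w ^ n * (exp (c * w))⁻¹ * c ^ n = (c ^ n * w ^ n) * (exp (c * w))⁻¹ := by ring
    _ ≤ (exp (c * w) * n !) * (exp (c * w))⁻¹ := by gcongr
    _ = n ! := by field_simp

lemma rpow_neg_le_two_rpow_mul_one_add_rpow_neg {a u γ : ℝ} (ha : 0 < a) (hu : 0 ≤ u)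
    (hγ : 0 ≤ γ) (hua : 1 + u ≤ 2 * a) :
    a ^ (-γ) ≤ 2 ^ γ * (1 + u) ^ (-γ) :=
  calc a ^ (-γ) = 2 ^ γ * (2 * a) ^ (-γ) := by
        rw [mul_rpow zero_le_two ha.le, ← mul_assoc, ← rpow_add two_pos, add_neg_cancel,
          rpow_zero, one_mul]
    _ ≤ 2 ^ γ * (1 + u) ^ (-γ) :=
        mul_le_mul_of_nonneg_left (rpow_le_rpow_of_nonpos (by positivity) hua (neg_nonpos.2 hγ))
          (by positivity)

variable {E : Type*} [NormedAddCommGroup E]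

def dampedRpow (γ α c : ℝ) (x : E) : ℝ :=
  ‖x‖ ^ (-γ) * exp (-(c * ‖x‖ ^ (-α)))

variable {γ α c : ℝ}

lemma dampedRpow_nonneg (x : E) : 0 ≤ dampedRpow γ α c x :=
  mul_nonneg (rpow_nonneg (norm_nonneg x) _) (exp_pos _).le

lemma dampedRpow_le_rpow_neg (hc : 0 ≤ c) (x : E) : dampedRpow γ α c x ≤ ‖x‖ ^ (-γ) :=
  mul_le_of_le_one_right (rpow_nonneg (norm_nonneg x) _)
    (exp_le_one_iff.2 (neg_nonpos.2 (mul_nonneg hc (rpow_nonneg (norm_nonneg x) _))))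

lemma dampedRpow_le_of_norm_le_one (hc : 0 < c) (hα : 0 < α) (hγ : 0 < γ) {x : E}
    (hx : ‖x‖ ≤ 1) : dampedRpow γ α c x ≤ ⌈γ / α⌉₊ ! / c ^ ⌈γ / α⌉₊ := by
  set n := ⌈γ / α⌉₊
  rcases (norm_nonneg x).eq_or_lt with hx0 | hx0
  · rw [dampedRpow, ← hx0, zero_rpow (neg_ne_zero.2 hγ.ne'), zero_mul]
    positivity
  have hγn : -α * n ≤ -γ := by
    rw [neg_mul, neg_le_neg_iff, mul_comm, ← div_le_iff₀ hα]
    exact Nat.le_ceil _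
  have hpow : ‖x‖ ^ (-γ) ≤ (‖x‖ ^ (-α)) ^ n := by
    rw [← rpow_natCast, ← rpow_mul hx0.le]
    exact rpow_le_rpow_of_exponent_ge hx0 hx hγn
  calc dampedRpow γ α c x ≤ (‖x‖ ^ (-α)) ^ n * exp (-(c * ‖x‖ ^ (-α))) :=
        mul_le_mul_of_nonneg_right hpow (exp_pos _).le
    _ ≤ n ! / c ^ n := pow_mul_exp_neg_mul_le hc (rpow_nonneg hx0.le _) n

lemma exists_dampedRpow_le_mul_one_add_norm_rpow_neg (hc : 0 < c) (hα : 0 < α) (hγ : 0 < γ) :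
    ∃ K, ∀ x : E, dampedRpow γ α c x ≤ K * (1 + ‖x‖) ^ (-γ) := by
  set B : ℝ := ⌈γ / α⌉₊ ! / c ^ ⌈γ / α⌉₊
  refine ⟨max 1 B * 2 ^ γ, fun x => ?_⟩
  rw [mul_assoc]
  rcases le_total ‖x‖ 1 with hx | hx
  · calc dampedRpow γ α c x ≤ max 1 B * 1 := by
          rw [mul_one]
          exact (dampedRpow_le_of_norm_le_one hc hα hγ hx).trans (le_max_right _ _)
      _ ≤ max 1 B * (2 ^ γ * (1 + ‖x‖) ^ (-γ)) := by
        gcongr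
        simpa using rpow_neg_le_two_rpow_mul_one_add_rpow_neg one_pos (norm_nonneg x) hγ.le
          (by linarith)
  · calc dampedRpow γ α c x ≤ max 1 B * ‖x‖ ^ (-γ) :=
          (dampedRpow_le_rpow_neg hc.le x).trans
            (le_mul_of_one_le_left (rpow_nonneg (norm_nonneg x) _) (le_max_left _ _))
      _ ≤ max 1 B * (2 ^ γ * (1 + ‖x‖) ^ (-γ)) := by
        gcongr
        exact rpow_neg_le_two_rpow_mul_one_add_rpow_neg (by linarith) (norm_nonneg x) hγ.le
          (by linarith)

variable [NormedSpace ℝ E]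

lemma dampedRpow_inv_smul {s : ℝ} (hs : 0 < s) (x : E) :
    dampedRpow γ α c (s⁻¹ • x) = s ^ γ * dampedRpow γ α (c * s ^ α) x := by
  have hscale : ∀ β : ℝ, ‖s⁻¹ • x‖ ^ (-β) = s ^ β * ‖x‖ ^ (-β) := fun β => by
    rw [norm_smul, norm_inv, norm_of_nonneg hs.le, mul_rpow (inv_nonneg.2 hs.le) (norm_nonneg x),
      inv_rpow hs.le, rpow_neg hs.le, inv_inv]
  simp only [dampedRpow, hscale]
  ring_nf

variable [FiniteDimensional ℝ E] [MeasurableSpace E] [BorelSpace E]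
  (μ : Measure E) [μ.IsAddHaarMeasure]

lemma integrable_dampedRpow (hc : 0 < c) (hα : 0 < α) (hγ : (finrank ℝ E : ℝ) < γ) :
    Integrable (dampedRpow γ α c) μ := by
  obtain ⟨K, hK⟩ :=
    exists_dampedRpow_le_mul_one_add_norm_rpow_neg (E := E) hc hα ((Nat.cast_nonneg _).trans_lt hγ)
  refine ((integrable_one_add_norm hγ).const_mul K).mono' ?_ (.of_forall fun x => ?_)
  · exact Measurable.aestronglyMeasurable (by unfold dampedRpow; fun_prop)
  · rw [norm_of_nonneg (dampedRpow_nonneg x)]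
    exact hK x

lemma integral_dampedRpow_mul_rpow {s : ℝ} (hs : 0 < s) :
    ∫ x, dampedRpow γ α (c * s ^ α) x ∂μ =
      s ^ ((finrank ℝ E : ℝ) - γ) * ∫ x, dampedRpow γ α c x ∂μ := by
  have h := Measure.integral_comp_inv_smul_of_nonneg μ (dampedRpow γ α c) hs.le
  simp only [dampedRpow_inv_smul hs, integral_const_mul, smul_eq_mul] at h
  rw [rpow_sub hs, rpow_natCast, div_mul_eq_mul_div, ← h]
  field_simp

end

lemma hatv_eq_of_one_le_norm {d : ℕ} {α : ℝ} (hα : 0 ≤ α) {y : EuclideanSpace ℝ (Fin d)}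
    (hy : 1 ≤ ‖y‖) : hatv d α y = ‖y‖ ^ (-α) := by
  have hy0 : y ≠ 0 := by
    rintro rfl
    norm_num at hy
  rw [hatv, if_neg hy0, min_eq_left (rpow_le_one_of_one_le_of_nonpos hy (neg_nonpos.2 hα))]

lemma norm_setIntegral_compl_ball_le_integral_dampedRpow {d : ℕ} {α γ c r : ℝ} (hα : 0 < α)
    (hγ : (d : ℝ) < γ) (hc : 0 < c) (hr : 1 ≤ r) :
    ‖∫ y in (Metric.ball (0 : EuclideanSpace ℝ (Fin d)) r)ᶜ, ‖y‖ ^ (-γ) * exp (-(c * hatv d α y))‖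
      ≤ ∫ y : EuclideanSpace ℝ (Fin d), dampedRpow γ α c y := by
  have hγE : (Module.finrank ℝ (EuclideanSpace ℝ (Fin d)) : ℝ) < γ := by
    rwa [finrank_euclideanSpace_fin]
  calc _ = ‖∫ y in (Metric.ball (0 : EuclideanSpace ℝ (Fin d)) r)ᶜ, dampedRpow γ α c y‖ := by
        refine congrArg _ (setIntegral_congr_fun measurableSet_ball.compl fun y hy => ?_)
        rw [Set.mem_compl_iff, Metric.mem_ball, dist_zero_right, not_lt] at hy
        rw [dampedRpow, hatv_eq_of_one_le_norm hα.le (hr.trans hy)]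
    _ = ∫ y in (Metric.ball (0 : EuclideanSpace ℝ (Fin d)) r)ᶜ, dampedRpow γ α c y :=
        norm_of_nonneg (setIntegral_nonneg measurableSet_ball.compl fun y _ => dampedRpow_nonneg y)
    _ ≤ _ := setIntegral_le_integral (integrable_dampedRpow _ hc hα hγE)
        (.of_forall dampedRpow_nonneg)

theorem stmt11_general (d : ℕ) (hd : 1 ≤ d) (α c₀ M γ : ℝ) (hα₁ : (d : ℝ) < α)
    (hc₀ : 0 < c₀) (hM : 0 < M) (hγ : (d : ℝ) < γ) :
    (fun t : ℝ =>
        ∫ y in (Metric.ball (0 : EuclideanSpace ℝ (Fin d))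
            (2 * M * Real.log t ^ ((α - d + 2) / (4 * d))))ᶜ,
          ‖y‖ ^ (-γ) * Real.exp (-(c₀ * Real.log t ^ (α / d) * hatv d α y)))
      =O[atTop] fun t => Real.log t ^ (((d : ℝ) - γ) / d) := by
  have hd0 : (0 : ℝ) < d := by exact_mod_cast hd
  have hα : 0 < α := hd0.trans hα₁
  have hradius : Tendsto (fun t => 2 * M * log t ^ ((α - d + 2) / (4 * d))) atTop atTop :=
    (((tendsto_rpow_atTop (div_pos (by linarith) (by positivity))).comp
      tendsto_log_atTop).const_mul_atTop (by positivity))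
  refine isBigO_iff.2 ⟨∫ y : EuclideanSpace ℝ (Fin d), dampedRpow γ α c₀ y, ?_⟩
  filter_upwards [hradius.eventually_ge_atTop 1, tendsto_log_atTop.eventually_gt_atTop 0]
    with t hr hL
  have hs : (log t ^ (1 / d : ℝ)) ^ α = log t ^ (α / d) := by
    rw [← rpow_mul hL.le, one_div_mul_eq_div]
  have hpow : (log t ^ (1 / d : ℝ)) ^ ((d : ℝ) - γ) = log t ^ (((d : ℝ) - γ) / d) := by
    rw [← rpow_mul hL.le, one_div_mul_eq_div]
  calc _ ≤ ∫ y, dampedRpow γ α (c₀ * log t ^ (α / d)) y :=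
        norm_setIntegral_compl_ball_le_integral_dampedRpow hα hγ (by positivity) hr
    _ = (∫ y, dampedRpow γ α c₀ y) * log t ^ (((d : ℝ) - γ) / d) := by
        rw [← hs, integral_dampedRpow_mul_rpow _ (by positivity), finrank_euclideanSpace_fin, hpow,
          mul_comm]
    _ ≤ _ := by rw [norm_of_nonneg (rpow_nonneg hL.le _)]

/-- With `ρ(t) = c₀(log t)^{α/d}` and `B_{2M}(t)` the ball of radius
`2M(log t)^{(α-d+2)/(4d)}`, for `γ > d`,
`∫_{ℝ^d ∖ B_{2M}(t)} |y|^{-γ} e^{-ρ(t) v̂(y)} dy = O((log t)^{(d-γ)/d})` as `t → ∞`. -/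
theorem stmt11 (d : ℕ) (hd : 1 ≤ d) (α c₀ M γ : ℝ) (hα₁ : (d : ℝ) < α) (hα₂ : α < d + 2)
    (hc₀ : 0 < c₀) (hM : 0 < M) (hγ : (d : ℝ) < γ) :
    (fun t : ℝ =>
        ∫ y in (Metric.ball (0 : EuclideanSpace ℝ (Fin d))
            (2 * M * Real.log t ^ ((α - d + 2) / (4 * d))))ᶜ,
          ‖y‖ ^ (-γ) * Real.exp (-(c₀ * Real.log t ^ (α / d) * hatv d α y)))
      =O[atTop] fun t => Real.log t ^ (((d : ℝ) - γ) / d) :=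
  stmt11_general d hd α c₀ M γ hα₁ hc₀ hM hγ
end

section
/- Let $\alpha > 1$ and consider dimension $d = 1$. There exist $\epsilon_0 > 0$ and $\rho_0 \ge 1$ such that for all $\rho \ge \rho_0$ and all real $\theta$ with $|\theta| \le \epsilon_0\, \rho^{1/(2\alpha)}$, $\int_{\mathbb{R}} \bigl( 1 - \cos\bigl(\theta\, \rho^{\frac{2\alpha-1}{2\alpha}}\, \hat v(y)\bigr) \bigr)\, e^{-\rho\,\hat v(y)}\,\mathrm{d}y \;\ge\; 2^{-2\alpha-2}\, e^{-1}\, \theta^2$. -/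
open MeasureTheory Real Filter

/-- The shape function on `ℝ`: `v̂(y) = min(|y|^{-α}, 1)`, with `v̂(0) = 1`. -/
noncomputable def hatv1 (α : ℝ) (y : ℝ) : ℝ :=
  if y = 0 then 1 else min (|y| ^ (-α)) 1

/-!
Take `ε₀ = ρ₀ = 1` and put `s = ρ^{1/(2α)}`, so that `ρ^{(2α-1)/(2α)} = ρ / s` and `s² = ρ^{1/α}`.
On the window `s² < y ≤ 2 s²` we have `2^{-α}/ρ ≤ v̂(y) ≤ 1/ρ`. Hence the exponential factor is at
least `e⁻¹`, and the argument `t` of the cosine satisfies `|t| ≤ |θ| / s ≤ 1`, where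
`1 - cos t ≥ t² / 4`. So the integrand is at least `2^{-2α-2} e⁻¹ θ² / s²` on a window of length `s²`.
-/

lemma hatv1_nonneg (α y : ℝ) : 0 ≤ hatv1 α y := by
  unfold hatv1
  split
  · exact zero_le_one
  · exact le_min (rpow_nonneg (abs_nonneg y) _) zero_le_one

lemma hatv1_le_one (α y : ℝ) : hatv1 α y ≤ 1 := by
  unfold hatv1
  split
  · exact le_rfl
  · exact min_le_right _ _

lemma measurable_hatv1 (α : ℝ) : Measurable (hatv1 α) :=
  Measurable.ite (measurableSet_singleton 0) measurable_const
    ((by fun_prop : Measurable fun y : ℝ => |y| ^ (-α)).min measurable_const)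

lemma hatv1_of_one_le {α y : ℝ} (hα : 0 ≤ α) (hy : 1 ≤ y) : hatv1 α y = y ^ (-α) := by
  rw [hatv1, if_neg (by linarith), abs_of_pos (by linarith),
    min_eq_left (rpow_le_one_of_one_le_of_nonpos hy (by linarith))]

lemma hatv1_le_max_one_abs_rpow {α : ℝ} (y : ℝ) : hatv1 α y ≤ max 1 |y| ^ (-α) := by
  rcases le_total |y| 1 with hy | hy
  · rw [max_eq_left hy, one_rpow]
    exact hatv1_le_one α y
  · have hy0 : y ≠ 0 := by rintro rfl; norm_num at hy
    rw [max_eq_right hy, hatv1, if_neg hy0]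
    exact min_le_left _ _

lemma hatv1_le_one_add_abs_rpow {α : ℝ} (hα : 0 ≤ α) (y : ℝ) :
    hatv1 α y ≤ 2 ^ α * (1 + |y|) ^ (-α) :=
  calc hatv1 α y ≤ max 1 |y| ^ (-α) := hatv1_le_max_one_abs_rpow y
    _ ≤ ((1 + |y|) / 2) ^ (-α) :=
        rpow_le_rpow_of_nonpos (by positivity)
          (by linarith [le_max_left 1 |y|, le_max_right 1 |y|]) (by linarith)
    _ = 2 ^ α * (1 + |y|) ^ (-α) := by
        rw [div_rpow (by positivity) zero_le_two, rpow_neg zero_le_two, div_inv_eq_mul, mul_comm]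

lemma integrable_hatv1 {α : ℝ} (hα : 1 < α) : Integrable (hatv1 α) := by
  refine ((integrable_one_add_norm (E := ℝ) (μ := volume) (r := α) (by simpa using hα)).const_mul
    (2 ^ α)).mono' (measurable_hatv1 α).aestronglyMeasurable (ae_of_all _ fun y => ?_)
  rw [norm_of_nonneg (hatv1_nonneg α y), norm_eq_abs]
  exact hatv1_le_one_add_abs_rpow (by linarith) y

lemma sq_div_four_le_one_sub_cos {t : ℝ} (ht : |t| ≤ 1) : t ^ 2 / 4 ≤ 1 - cos t := by
  have hb := (abs_sub_le_iff.1 (cos_bound ht)).1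
  have h4 : |t| ^ 4 ≤ |t| ^ 2 := pow_le_pow_of_le_one (abs_nonneg t) ht (by norm_num)
  rw [sq_abs] at h4
  nlinarith

lemma integrable_one_sub_cos_mul_exp {X : Type*} [MeasurableSpace X] {μ : Measure X}
    {g : X → ℝ} (hg : Integrable g μ) (hg0 : 0 ≤ g) (hg1 : g ≤ 1) (θ : ℝ) {ρ : ℝ} (hρ : 0 ≤ ρ) :
    Integrable (fun y => (1 - cos (θ * g y)) * exp (-(ρ * g y))) μ := by
  refine (hg.const_mul (θ ^ 2 / 2)).mono'
    ((by fun_prop : Continuous fun u => (1 - cos (θ * u)) * exp (-(ρ * u))).comp_aestronglyMeasurable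
      hg.aestronglyMeasurable) (ae_of_all _ fun y => ?_)
  have hcos : 1 - cos (θ * g y) ≤ (θ * g y) ^ 2 / 2 := by
    linarith [one_sub_sq_div_two_le_cos (x := θ * g y)]
  have hexp : exp (-(ρ * g y)) ≤ 1 :=
    exp_le_one_iff.2 (neg_nonpos.2 (mul_nonneg hρ (hg0 y)))
  have hsq : (θ * g y) ^ 2 / 2 ≤ θ ^ 2 / 2 * g y := by
    have hg2 : g y ^ 2 ≤ g y := pow_le_of_le_one (hg0 y) (hg1 y) two_ne_zero
    calc (θ * g y) ^ 2 / 2 = θ ^ 2 / 2 * g y ^ 2 := by ring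
      _ ≤ θ ^ 2 / 2 * g y := mul_le_mul_of_nonneg_left hg2 (by positivity)
  rw [norm_mul, norm_of_nonneg (sub_nonneg.2 (cos_le_one _)), norm_of_nonneg (exp_pos _).le]
  calc (1 - cos (θ * g y)) * exp (-(ρ * g y)) ≤ (θ * g y) ^ 2 / 2 * 1 :=
        mul_le_mul hcos hexp (exp_pos _).le (by positivity)
    _ ≤ θ ^ 2 / 2 * g y := by rw [mul_one]; exact hsq

lemma sq_mul_exp_neg_one_le_one_sub_cos_mul_exp {ρ c θ m h : ℝ} (hρ : 0 < ρ) (hc : 0 ≤ c)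
    (hθ : |θ| * c ≤ ρ) (hm : 0 ≤ m) (hmh : m ≤ h) (hh : h ≤ ρ⁻¹) :
    (θ * c * m) ^ 2 / 4 * exp (-1) ≤ (1 - cos (θ * (c * h))) * exp (-(ρ * h)) := by
  have hρh : ρ * h ≤ 1 := by
    simpa [mul_inv_cancel₀ hρ.ne'] using mul_le_mul_of_nonneg_left hh hρ.le
  have ht : |θ * (c * h)| ≤ 1 := by
    rw [abs_mul θ, abs_of_nonneg (show 0 ≤ c * h by nlinarith), ← mul_assoc]
    nlinarith
  have hsq : (θ * c * m) ^ 2 ≤ (θ * (c * h)) ^ 2 := by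
    rw [← mul_assoc, mul_pow, mul_pow (θ * c)]
    gcongr
  calc (θ * c * m) ^ 2 / 4 * exp (-1) ≤ (θ * (c * h)) ^ 2 / 4 * exp (-1) := by gcongr
    _ ≤ (1 - cos (θ * (c * h))) * exp (-(ρ * h)) :=
        mul_le_mul (sq_div_four_le_one_sub_cos ht) (exp_le_exp.2 (by linarith)) (exp_pos _).le
          (sub_nonneg.2 (cos_le_one _))

lemma mul_le_integral_of_le_on_Ioc {f : ℝ → ℝ} {a b K : ℝ} (hab : a ≤ b) (hf : Integrable f)
    (hf0 : 0 ≤ f) (hK : ∀ y ∈ Set.Ioc a b, K ≤ f y) : K * (b - a) ≤ ∫ y, f y :=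
  calc K * (b - a) = K * volume.real (Set.Ioc a b) := by rw [Real.volume_real_Ioc_of_le hab]
    _ ≤ ∫ y in Set.Ioc a b, f y :=
        setIntegral_ge_of_const_le_real measurableSet_Ioc measure_Ioc_lt_top.ne hK hf.integrableOn
    _ ≤ ∫ y, f y := setIntegral_le_integral hf (ae_of_all _ hf0)

lemma le_integrand_of_mem_Ioc {α ρ s c θ y : ℝ} (hα : 0 ≤ α) (hs : 1 ≤ s) (hc : 0 ≤ c)
    (hcs : c * s = ρ) (hs2 : (s ^ 2) ^ (-α) = ρ⁻¹) (hθ : |θ| ≤ s)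
    (hy : y ∈ Set.Ioc (s ^ 2) (2 * s ^ 2)) :
    (θ * c * (2 ^ (-α) * ρ⁻¹)) ^ 2 / 4 * exp (-1) ≤
      (1 - cos (θ * (c * hatv1 α y))) * exp (-(ρ * hatv1 α y)) := by
  obtain ⟨hy, hy'⟩ := hy
  have hs2pos : 0 < s ^ 2 := by positivity
  have hρ : 0 < ρ := inv_pos.1 (hs2 ▸ rpow_pos_of_pos hs2pos _)
  rw [hatv1_of_one_le hα (by nlinarith)]
  refine sq_mul_exp_neg_one_le_one_sub_cos_mul_exp hρ hc
    (by rw [← hcs, mul_comm c]; gcongr) (by positivity) ?_ ?_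
  · rw [← hs2, ← mul_rpow zero_le_two hs2pos.le]
    exact rpow_le_rpow_of_nonpos (hs2pos.trans hy) hy' (by linarith)
  · rw [← hs2]
    exact rpow_le_rpow_of_nonpos hs2pos hy.le (by linarith)

/-- Central-region lower bound: for `|θ| ≤ ε₀ ρ^{1/(2α)}` and `ρ` large,
`∫ (1 - cos(θ ρ^{(2α-1)/(2α)} v̂(y))) e^{-ρ v̂(y)} dy ≥ 2^{-2α-2} e⁻¹ θ²`. -/
theorem stmt13 (α : ℝ) (hα : 1 < α) :
    ∃ ε₀ > (0 : ℝ), ∃ ρ₀ : ℝ, 1 ≤ ρ₀ ∧ ∀ ρ ≥ ρ₀, ∀ θ : ℝ,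
      |θ| ≤ ε₀ * ρ ^ (1 / (2 * α)) →
      (∫ y : ℝ, (1 - Real.cos (θ * (ρ ^ ((2 * α - 1) / (2 * α)) * hatv1 α y))) *
          Real.exp (-(ρ * hatv1 α y)))
        ≥ (2 : ℝ) ^ (-(2 * α) - 2) * Real.exp (-1) * θ ^ 2 := by
  refine ⟨1, one_pos, 1, le_rfl, fun ρ hρ θ hθ => ?_⟩
  rw [one_mul] at hθ
  have hρ0 : 0 < ρ := by linarith
  set s := ρ ^ (1 / (2 * α))
  set c := ρ ^ ((2 * α - 1) / (2 * α))
  have hs : 1 ≤ s := one_le_rpow hρ (by positivity)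
  have hcs : c * s = ρ := by
    rw [← rpow_add hρ0, ← add_div, sub_add_cancel, div_self (by positivity), rpow_one]
  have hs2 : (s ^ 2) ^ (-α) = ρ⁻¹ := by
    rw [← rpow_natCast, ← rpow_mul hρ0.le, ← rpow_mul hρ0.le,
      show 1 / (2 * α) * ((2 : ℕ) : ℝ) * -α = -1 by push_cast; field_simp, rpow_neg_one]
  have hint : Integrable fun y => (1 - cos (θ * (c * hatv1 α y))) * exp (-(ρ * hatv1 α y)) := by
    simpa only [mul_assoc] using integrable_one_sub_cos_mul_exp (integrable_hatv1 hα)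
      (hatv1_nonneg α) (hatv1_le_one α) (θ * c) hρ0.le
  have hwindow := mul_le_integral_of_le_on_Ioc (by nlinarith) hint
    (fun y => mul_nonneg (sub_nonneg.2 (cos_le_one _)) (exp_pos _).le)
    (fun y => le_integrand_of_mem_Ioc (by linarith) hs (by positivity) hcs hs2 hθ)
  have htwo : (2 : ℝ) ^ (-(2 * α) - 2) = (2 ^ (-α)) ^ 2 / 4 := by
    rw [rpow_sub zero_lt_two, rpow_two, ← rpow_mul_natCast zero_le_two]
    norm_num [mul_comm]
  rw [ge_iff_le, htwo]
  convert hwindow using 1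
  rw [eq_div_of_mul_eq (by positivity) hcs]
  field_simp
  ring
end
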